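/- arXiv:1910.13318 — 2 statements merged into one kernel-verified Lean document; each statement's English description precedes it below -/
import Mathlib

section
/- There exists a function N(n) with N(n) ≤ 2^(2^((2+o(1))n)) such that every injective 2-dimensional array of size N(n) × N(n) contains a monotone n × n subarray. Concretely: for every n ≥ 1, every injective f : [N] × [N] → ℝ with N = (4n)^(2^(4n)) contains an n × n monotone subarray. -/
/-- A 2-dimensional array is monotone on a subgrid `A × B` if along each
coordinate all lines are increasing or all are decreasing. -/
def Mono2On {N : ℕ} (f : Fin N × Fin N → ℝ)
    (A B : Finset (Fin N)) : Prop :=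
  ((∀ a₁ ∈ A, ∀ a₂ ∈ A, ∀ b ∈ B, a₁ < a₂ → f (a₁, b) < f (a₂, b)) ∨
   (∀ a₁ ∈ A, ∀ a₂ ∈ A, ∀ b ∈ B, a₁ < a₂ → f (a₂, b) < f (a₁, b))) ∧
  ((∀ a ∈ A, ∀ b₁ ∈ B, ∀ b₂ ∈ B, b₁ < b₂ → f (a, b₁) < f (a, b₂)) ∨
   (∀ a ∈ A, ∀ b₁ ∈ B, ∀ b₂ ∈ B, b₁ < b₂ → f (a, b₂) < f (a, b₁)))

open Function Finset

section ES

variable {α : Type*} [LinearOrder α]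

/-- Erdős–Szekeres (adapted from Mathlib's Archive). -/
theorem my_erdos_szekeres {r s n : ℕ} {f : Fin n → α} (hn : r * s < n) (hf : Injective f) :
    (∃ t : Finset (Fin n), r < #t ∧ StrictMonoOn f ↑t) ∨
      ∃ t : Finset (Fin n), s < #t ∧ StrictAntiOn f ↑t := by
  let inc_sequences_ending_in : Fin n → Finset (Finset (Fin n)) := fun i =>
    univ.powerset.filter fun t => Finset.max t = i ∧ StrictMonoOn f ↑t
  let dec_sequences_ending_in : Fin n → Finset (Finset (Fin n)) := fun i =>
    univ.powerset.filter fun t => Finset.max t = i ∧ StrictAntiOn f ↑t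
  have inc_i : ∀ i, {i} ∈ inc_sequences_ending_in i := fun i => by
    simp [inc_sequences_ending_in, StrictMonoOn]
  have dec_i : ∀ i, {i} ∈ dec_sequences_ending_in i := fun i => by
    simp [dec_sequences_ending_in, StrictAntiOn]
  let ab' : Fin n → ℕ × ℕ := by
    intro i
    apply
      (max' ((inc_sequences_ending_in i).image card) (Nonempty.image ⟨{i}, inc_i i⟩ _),
        max' ((dec_sequences_ending_in i).image card) (Nonempty.image ⟨{i}, dec_i i⟩ _))
  generalize hab : ab' = ab
  rsuffices ⟨i, hi⟩ : ∃ i, r < (ab i).1 ∨ s < (ab i).2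
  · refine Or.imp ?_ ?_ hi
    on_goal 1 =>
      have : (ab i).1 ∈ image card (inc_sequences_ending_in i) := by
        simp only [← hab]; exact max'_mem _ (Nonempty.image ⟨{i}, inc_i i⟩ _)
    on_goal 2 =>
      have : (ab i).2 ∈ image card (dec_sequences_ending_in i) := by
        simp only [← hab]; exact max'_mem _ (Nonempty.image ⟨{i}, dec_i i⟩ _)
    all_goals
      intro hi
      rw [mem_image] at this
      obtain ⟨t, ht₁, ht₂⟩ := this
      refine ⟨t, by rwa [ht₂], ?_⟩
      rw [mem_filter] at ht₁
      apply ht₁.2.2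
  have : Injective ab := by
    simp only [← hab]
    apply Function.Injective.of_lt_imp_ne
    intro i j k q
    injection q with q₁ q₂
    cases lt_or_gt_of_ne fun _ => ne_of_lt ‹i < j› (hf ‹f i = f j›)
    on_goal 1 =>
      apply ne_of_lt _ q₁
      have : (ab' i).1 ∈ image card (inc_sequences_ending_in i) := by exact max'_mem _ (Nonempty.image ⟨{i}, inc_i i⟩ _)
    on_goal 2 =>
      apply ne_of_lt _ q₂
      have : (ab' i).2 ∈ image card (dec_sequences_ending_in i) := by exact max'_mem _ (Nonempty.image ⟨{i}, dec_i i⟩ _)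
    all_goals
      rw [Nat.lt_iff_add_one_le]
      apply le_max'
      rw [mem_image] at this ⊢
      rcases this with ⟨t, ht₁, ht₂⟩
      rw [mem_filter] at ht₁
      have : t.max = i := by simp only [ht₁.2.1]
      refine ⟨insert j t, ?_, ?_⟩
      · rw [mem_filter]
        refine ⟨?_, ?_, ?_⟩
        · rw [mem_powerset]; apply subset_univ
        · convert max_insert (a := j) (s := t)
          rw [ht₁.2.1, max_eq_left]
          apply WithBot.coe_le_coe.mpr (le_of_lt ‹i < j›)
        simp only [StrictMonoOn, StrictAntiOn, coe_insert, Set.mem_insert_iff, mem_coe]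
        rintro x ⟨rfl | _⟩ y ⟨rfl | _⟩ _
        · apply (irrefl _ ‹j < j›).elim
        · exfalso
          apply not_le_of_gt (_root_.trans ‹i < j› ‹j < y›) (le_max_of_eq ‹y ∈ t› ‹t.max = i›)
        · first
          | apply lt_of_le_of_lt _ ‹f i < f j›
          | apply lt_of_lt_of_le ‹f j < f i› _
          rcases lt_or_eq_of_le (le_max_of_eq ‹x ∈ t› ‹t.max = i›) with (_ | rfl)
          · apply le_of_lt (ht₁.2.2 ‹x ∈ t› (mem_of_max ‹t.max = i›) ‹x < i›)
          · rfl
        · apply ht₁.2.2 ‹x ∈ t› ‹y ∈ t› ‹x < y›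
      · rw [card_insert_of_notMem, ht₂]
        intro
        apply not_le_of_gt ‹i < j› (le_max_of_eq ‹j ∈ t› ‹t.max = i›)
  by_contra! q
  let ran : Finset (ℕ × ℕ) := (range r).image Nat.succ ×ˢ (range s).image Nat.succ
  have : image ab univ ⊆ ran := by
    rintro ⟨x₁, x₂⟩
    simp only [ran, mem_image, exists_prop, mem_range, mem_univ, mem_product, true_and,
      Prod.ext_iff]
    rintro ⟨i, rfl, rfl⟩
    specialize q i
    have z : 1 ≤ (ab i).1 ∧ 1 ≤ (ab i).2 := by
      simp only [← hab]
      constructor <;>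
        · apply le_max'
          rw [mem_image]
          exact ⟨{i}, by solve_by_elim, card_singleton i⟩
    exact ⟨⟨(ab i).1 - 1, by omega⟩, (ab i).2 - 1, by omega⟩
  apply not_le_of_gt hn
  simpa [ran, Nat.succ_injective, card_image_of_injective, ‹Injective ab›] using card_le_card this

/-- Erdős–Szekeres on a finset. -/
theorem es_finset {N : ℕ} {S : Finset (Fin N)} {g : Fin N → α} (hg : Injective g)
    {r s : ℕ} (h : r * s < S.card) :
    (∃ T, T ⊆ S ∧ r < T.card ∧ StrictMonoOn g ↑T) ∨
      ∃ T, T ⊆ S ∧ s < T.card ∧ StrictAntiOn g ↑T := by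
  let e := S.orderIsoOfFin rfl
  have hcoe : ∀ i : Fin S.card, ((e i : Fin N)) ∈ S := fun i => (e i).2
  have hemb : Injective fun i : Fin S.card => (e i : Fin N) :=
    fun i j hij => e.injective (Subtype.ext hij)
  have hf' : Injective fun i : Fin S.card => g (e i) := fun i j hij => hemb (hg hij)
  have hlt : ∀ i j : Fin S.card, i < j ↔ (e i : Fin N) < (e j : Fin N) := by
    intro i j
    exact ⟨fun h => Subtype.coe_lt_coe.2 (e.lt_iff_lt.2 h),
      fun h => e.lt_iff_lt.1 (Subtype.coe_lt_coe.1 h)⟩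
  rcases my_erdos_szekeres (f := fun i : Fin S.card => g (e i)) h hf' with ⟨t, ht, hm⟩ | ⟨t, ht, hm⟩
  · refine Or.inl ⟨t.image (fun i => (e i : Fin N)), ?_, ?_, ?_⟩
    · intro x hx; rcases mem_image.1 hx with ⟨i, _, rfl⟩; exact hcoe i
    · rwa [card_image_of_injective _ hemb]
    · rintro x hx y hy hxy
      rcases mem_coe.1 hx with hx'
      rcases mem_image.1 hx' with ⟨i, hi, rfl⟩
      rcases mem_image.1 (mem_coe.1 hy) with ⟨j, hj, rfl⟩
      exact hm hi hj ((hlt i j).2 hxy)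
  · refine Or.inr ⟨t.image (fun i => (e i : Fin N)), ?_, ?_, ?_⟩
    · intro x hx; rcases mem_image.1 hx with ⟨i, _, rfl⟩; exact hcoe i
    · rwa [card_image_of_injective _ hemb]
    · rintro x hx y hy hxy
      rcases mem_image.1 (mem_coe.1 hx) with ⟨i, hi, rfl⟩
      rcases mem_image.1 (mem_coe.1 hy) with ⟨j, hj, rfl⟩
      exact hm hi hj ((hlt i j).2 hxy)

end ES

section Phases

variable {N : ℕ} (f : Fin N × Fin N → ℝ)

/-- Phase A: uniformize comparison signs for a set of pairs of rows by halving columns. -/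
theorem phaseA (P : Finset (Fin N × Fin N)) (B₀ : Finset (Fin N)) :
    ∃ B, B ⊆ B₀ ∧ B₀.card ≤ 2 ^ P.card * B.card ∧
      ∀ p ∈ P, ∀ b ∈ B, ∀ b' ∈ B, (f (p.1, b) < f (p.2, b) ↔ f (p.1, b') < f (p.2, b')) := by
  classical
  induction P using Finset.induction_on with
  | empty => exact ⟨B₀, Subset.rfl, by simp, by simp⟩
  | @insert p P hp ih =>
    obtain ⟨B, hBsub, hBcard, hB⟩ := ih
    set Bp := B.filter (fun b => f (p.1, b) < f (p.2, b)) with hBp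
    set Bm := B.filter (fun b => ¬ f (p.1, b) < f (p.2, b)) with hBm
    have hsplit : Bp.card + Bm.card = B.card := card_filter_add_card_filter_not _
    have hcard : card (insert p P) = P.card + 1 := card_insert_of_notMem hp
    rcases le_total Bp.card Bm.card with hle | hle
    · refine ⟨Bm, (filter_subset _ _).trans hBsub, ?_, ?_⟩
      · rw [hcard]
        calc B₀.card ≤ 2 ^ P.card * B.card := hBcard
        _ ≤ 2 ^ P.card * (2 * Bm.card) := Nat.mul_le_mul_left _ (by omega)
        _ = 2 ^ (P.card + 1) * Bm.card := by ring
      · intro q hq b hb b' hb'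
        rcases mem_insert.1 hq with rfl | hq'
        · have h1 := (mem_filter.1 hb).2
          have h2 := (mem_filter.1 hb').2
          exact iff_of_false h1 h2
        · exact hB q hq' b (filter_subset _ _ hb) b' (filter_subset _ _ hb')
    · refine ⟨Bp, (filter_subset _ _).trans hBsub, ?_, ?_⟩
      · rw [hcard]
        calc B₀.card ≤ 2 ^ P.card * B.card := hBcard
        _ ≤ 2 ^ P.card * (2 * Bp.card) := Nat.mul_le_mul_left _ (by omega)
        _ = 2 ^ (P.card + 1) * Bp.card := by ring
      · intro q hq b hb b' hb'
        rcases mem_insert.1 hq with rfl | hq'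
        · have h1 := (mem_filter.1 hb).2
          have h2 := (mem_filter.1 hb').2
          exact iff_of_true h1 h2
        · exact hB q hq' b (filter_subset _ _ hb) b' (filter_subset _ _ hb')

/-- the required column-count sequence for iterated Erdős–Szekeres -/
def mseq (n : ℕ) : ℕ → ℕ
  | 0 => n
  | k + 1 => (mseq n k - 1) ^ 2 + 1

lemma le_pred_sq_succ (t : ℕ) : t ≤ (t - 1) ^ 2 + 1 := by
  rcases t with _ | m
  · simp
  · have h : m ≤ m ^ 2 := Nat.le_self_pow (by norm_num) m
    simpa [Nat.succ_sub_one] using Nat.succ_le_succ h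

lemma mseq_ge (n k : ℕ) : n ≤ mseq n k := by
  induction k with
  | zero => simp [mseq]
  | succ k ih =>
    calc n ≤ mseq n k := ih
    _ ≤ _ := le_pred_sq_succ _

lemma mseq_le (n : ℕ) (hn : 1 ≤ n) (k : ℕ) : mseq n k ≤ n ^ 2 ^ k := by
  induction k with
  | zero => simp [mseq]
  | succ k ih =>
    have h1 : 1 ≤ mseq n k := le_trans hn (mseq_ge n k)
    have : (mseq n k - 1) ^ 2 + 1 ≤ (mseq n k) ^ 2 := by
      obtain ⟨m, hm⟩ := Nat.exists_eq_add_of_le h1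
      rw [hm]
      have h2 : 1 + m - 1 = m := by omega
      rw [h2]
      nlinarith
    calc mseq n (k + 1) = (mseq n k - 1) ^ 2 + 1 := rfl
    _ ≤ (mseq n k) ^ 2 := this
    _ ≤ (n ^ 2 ^ k) ^ 2 := Nat.pow_le_pow_left ih 2
    _ = n ^ 2 ^ (k + 1) := by rw [← pow_mul, pow_succ]

/-- Phase B: iterated Erdős–Szekeres to monotonize a set of rows. -/
theorem phaseB (hf : Injective f) {n : ℕ} (hn : 1 ≤ n) :
    ∀ (k : ℕ) (R B₀ : Finset (Fin N)), R.card ≤ k → mseq n k ≤ B₀.card →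
      ∃ B, B ⊆ B₀ ∧ n ≤ B.card ∧
        ∀ a ∈ R, StrictMonoOn (fun b => f (a, b)) ↑B ∨ StrictAntiOn (fun b => f (a, b)) ↑B := by
  intro k
  induction k with
  | zero =>
    intro R B₀ hR hB₀
    have : R = ∅ := card_eq_zero.1 (le_antisymm hR (Nat.zero_le _))
    exact ⟨B₀, Subset.rfl, hB₀, by simp [this]⟩
  | succ k ih =>
    intro R B₀ hR hB₀
    rcases R.eq_empty_or_nonempty with rfl | ⟨a, ha⟩
    · exact ⟨B₀, Subset.rfl, le_trans (mseq_ge n (k+1)) hB₀, by simp⟩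
    · have hg : Injective (fun b => f (a, b)) := fun b b' h => by
        have := hf h; exact (Prod.ext_iff.1 this).2
      have hlt : (mseq n k - 1) * (mseq n k - 1) < B₀.card := by
        have h2 : (mseq n k - 1) ^ 2 + 1 ≤ B₀.card := hB₀
        rw [pow_two] at h2
        omega
      rcases es_finset hg hlt with ⟨T, hTsub, hTcard, hT⟩ | ⟨T, hTsub, hTcard, hT⟩
      all_goals {
        have hT' : mseq n k ≤ T.card := by omega
        obtain ⟨B, hBsub, hBcard, hB⟩ := ih (R.erase a) T (by
          have := Finset.card_erase_of_mem ha; omega) hT'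
        refine ⟨B, hBsub.trans hTsub, hBcard, ?_⟩
        intro a' ha'
        by_cases haa : a' = a
        · subst haa
          first
          | exact Or.inl (hT.mono (by exact_mod_cast hBsub))
          | exact Or.inr (hT.mono (by exact_mod_cast hBsub))
        · exact hB a' (mem_erase.2 ⟨haa, ha'⟩)
      }

end Phases

/-- main arithmetic: `8n⁴ + 2^{2n} ≤ 2^{4n}` -/
lemma arith1 (n : ℕ) (hn : 1 ≤ n) : 8 * n ^ 4 + 2 ^ (2 * n) ≤ 2 ^ (4 * n) := by
  induction n, hn using Nat.le_induction with
  | base => norm_num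
  | succ n hn ih =>
    have h1 : (n + 1) ^ 4 ≤ 16 * n ^ 4 := by
      calc (n + 1) ^ 4 ≤ (2 * n) ^ 4 := Nat.pow_le_pow_left (by omega) 4
      _ = 16 * n ^ 4 := by ring
    have h2 : 2 ^ (4 * (n + 1)) = 16 * 2 ^ (4 * n) := by rw [Nat.mul_succ, pow_add]; ring
    have h3 : 2 ^ (2 * (n + 1)) = 4 * 2 ^ (2 * n) := by rw [Nat.mul_succ, pow_add]; ring
    rw [h2, h3]
    generalize hY : 2 ^ (2 * n) = Y at ih ⊢
    generalize hX : 2 ^ (4 * n) = X at ih ⊢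
    generalize hA : (n + 1) ^ 4 = A at h1 ⊢
    generalize hB : n ^ 4 = B at ih h1 ⊢
    omega

/-- main size bound -/
lemma arith_main (n : ℕ) (hn : 1 ≤ n) :
    2 ^ (((2 * n - 1) ^ 2 + 1) ^ 2) * n ^ 2 ^ (2 * n) ≤ (4 * n) ^ 2 ^ (4 * n) := by
  have a1 := arith1 n hn
  have hle : 2 ^ (2 * n) ≤ 2 ^ (4 * n) := Nat.pow_le_pow_right (by norm_num) (by omega)
  have hm : (2 * n - 1) ^ 2 + 1 ≤ 4 * n ^ 2 := by
    obtain ⟨k, rfl⟩ := Nat.exists_eq_add_of_le hn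
    have h2 : 2 * (1 + k) - 1 = 2 * k + 1 := by omega
    rw [h2]
    nlinarith
  have hm2 : ((2 * n - 1) ^ 2 + 1) ^ 2 ≤ 16 * n ^ 4 := by
    calc ((2 * n - 1) ^ 2 + 1) ^ 2 ≤ (4 * n ^ 2) ^ 2 := Nat.pow_le_pow_left hm 2
    _ = 16 * n ^ 4 := by ring
  have hexp : ((2 * n - 1) ^ 2 + 1) ^ 2 ≤ 2 * (2 ^ (4 * n) - 2 ^ (2 * n)) := by omega
  calc 2 ^ (((2 * n - 1) ^ 2 + 1) ^ 2) * n ^ 2 ^ (2 * n)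
      ≤ 2 ^ (2 * (2 ^ (4 * n) - 2 ^ (2 * n))) * n ^ 2 ^ (2 * n) :=
        Nat.mul_le_mul (Nat.pow_le_pow_right (by norm_num) hexp) le_rfl
    _ = 4 ^ (2 ^ (4 * n) - 2 ^ (2 * n)) * n ^ 2 ^ (2 * n) := by
        rw [pow_mul]; norm_num
    _ ≤ (4 * n) ^ (2 ^ (4 * n) - 2 ^ (2 * n)) * (4 * n) ^ 2 ^ (2 * n) :=
        Nat.mul_le_mul (Nat.pow_le_pow_left (by omega) _) (Nat.pow_le_pow_left (by omega) _)
    _ = (4 * n) ^ 2 ^ (4 * n) := by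
        rw [← pow_add, Nat.sub_add_cancel hle]

lemma m_le_sq (n : ℕ) (hn : 1 ≤ n) : (2 * n - 1) ^ 2 + 1 ≤ 4 * n ^ 2 := by
  obtain ⟨k, rfl⟩ := Nat.exists_eq_add_of_le hn
  have h2 : 2 * (1 + k) - 1 = 2 * k + 1 := by omega
  rw [h2]
  nlinarith

/-- With `N = (4n)^(2^(4n))` (which is `2^(2^((2+o(1))n))`), every injective
`N × N` array contains an `n × n` monotone subarray, so `M₂(n) ≤ 2^(2^((2+o(1))n))`. -/
theorem stmt_4 (n : ℕ) (hn : 1 ≤ n)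
    (f : Fin ((4 * n) ^ 2 ^ (4 * n)) × Fin ((4 * n) ^ 2 ^ (4 * n)) → ℝ)
    (hf : Function.Injective f) :
    ∃ A B : Finset (Fin ((4 * n) ^ 2 ^ (4 * n))),
      A.card = n ∧ B.card = n ∧ Mono2On f A B := by
  classical
  set m := (2 * n - 1) ^ 2 + 1 with hm
  -- the grid is big enough to contain the first `m` rows
  have hmM : m ≤ (4 * n) ^ 2 ^ (4 * n) := by
    have h1 : m ≤ 4 * n ^ 2 := m_le_sq n hn
    have h2 : 4 * n ^ 2 ≤ (4 * n) ^ 2 := by nlinarith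
    have h2' : (2 : ℕ) ≤ 2 ^ (4 * n) := by
      calc (2 : ℕ) = 2 ^ 1 := rfl
      _ ≤ 2 ^ (4 * n) := Nat.pow_le_pow_right (by norm_num) (by omega)
    have h3 : (4 * n) ^ 2 ≤ (4 * n) ^ 2 ^ (4 * n) := Nat.pow_le_pow_right (by omega) h2'
    omega
  -- the first `m` rows
  set A₀ : Finset (Fin ((4 * n) ^ 2 ^ (4 * n))) :=
    (Finset.range m).attachFin
      (fun x hx => lt_of_lt_of_le (Finset.mem_range.1 hx) hmM) with hA0
  have hA0card : A₀.card = m := by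
    rw [hA0, Finset.card_attachFin, Finset.card_range]
  -- Phase A : uniformize comparison signs of all pairs of rows of A₀
  obtain ⟨B₁, hB₁sub, hB₁card, hB₁sign⟩ := phaseA f (A₀ ×ˢ A₀) Finset.univ
  have hPcard : (A₀ ×ˢ A₀).card = m ^ 2 := by
    rw [Finset.card_product, hA0card, pow_two]
  have hB₁big : mseq n (2 * n) ≤ B₁.card := by
    have h1 : 2 ^ (m ^ 2) * mseq n (2 * n) ≤ (4 * n) ^ 2 ^ (4 * n) := by
      calc 2 ^ (m ^ 2) * mseq n (2 * n) ≤ 2 ^ (m ^ 2) * n ^ 2 ^ (2 * n) :=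
            Nat.mul_le_mul_left _ (mseq_le n hn _)
      _ ≤ (4 * n) ^ 2 ^ (4 * n) := arith_main n hn
    have h2 : (4 * n) ^ 2 ^ (4 * n) ≤ 2 ^ (m ^ 2) * B₁.card := by
      have := hB₁card
      rwa [hPcard, Finset.card_univ, Fintype.card_fin] at this
    exact Nat.le_of_mul_le_mul_left (le_trans h1 h2) (Nat.pow_pos (by norm_num))
  have hB₁ne : B₁.Nonempty := by
    rw [← Finset.card_pos]
    have := mseq_ge n (2 * n)
    omega
  obtain ⟨b₀, hb₀⟩ := hB₁ne
  -- Phase 1 ES : a subset of 2n rows of A₀ on which the reference column b₀ is monotone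
  have hg : Function.Injective (fun a : Fin ((4 * n) ^ 2 ^ (4 * n)) => f (a, b₀)) :=
    fun a a' h => (Prod.ext_iff.1 (hf h)).1
  have hES1 : (2 * n - 1) * (2 * n - 1) < A₀.card := by
    rw [hA0card, hm, pow_two]
    exact Nat.lt_succ_self _
  have hES : ∃ A₁, A₁ ⊆ A₀ ∧ 2 * n ≤ A₁.card ∧
      (StrictMonoOn (fun a => f (a, b₀)) ↑A₁ ∨ StrictAntiOn (fun a => f (a, b₀)) ↑A₁) := by
    rcases es_finset hg hES1 with ⟨T, h1, h2, h3⟩ | ⟨T, h1, h2, h3⟩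
    · exact ⟨T, h1, by omega, Or.inl h3⟩
    · exact ⟨T, h1, by omega, Or.inr h3⟩
  obtain ⟨A₁, hA₁sub, hA₁card, hdir⟩ := hES
  obtain ⟨A₂, hA₂sub, hA₂card⟩ := Finset.exists_subset_card_eq hA₁card
  -- Phase B : iterated ES makes every row of A₂ monotone on B₂
  obtain ⟨B₂, hB₂sub, hB₂card, hB₂mono⟩ :=
    phaseB f hf hn (2 * n) A₂ B₁ (le_of_eq hA₂card) hB₁big
  -- pigeonhole the 2n rows by direction
  have hsplit := Finset.card_filter_add_card_filter_not
    (s := A₂) (p := fun a => StrictMonoOn (fun b => f (a, b)) ↑B₂)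
  have hclass : ∃ C, C ⊆ A₂ ∧ n ≤ C.card ∧
      ((∀ a ∈ C, StrictMonoOn (fun b => f (a, b)) ↑B₂) ∨
       (∀ a ∈ C, StrictAntiOn (fun b => f (a, b)) ↑B₂)) := by
    by_cases hcase :
        n ≤ (A₂.filter (fun a => StrictMonoOn (fun b => f (a, b)) ↑B₂)).card
    · exact ⟨_, Finset.filter_subset _ _, hcase,
        Or.inl (fun a ha => (Finset.mem_filter.1 ha).2)⟩
    · refine ⟨A₂.filter (fun a => ¬ StrictMonoOn (fun b => f (a, b)) ↑B₂),
        Finset.filter_subset _ _, by omega, Or.inr ?_⟩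
      intro a ha
      rcases hB₂mono a (Finset.filter_subset _ _ ha) with h | h
      · exact absurd h (Finset.mem_filter.1 ha).2
      · exact h
  obtain ⟨C, hCsub, hCcard, hrowdir⟩ := hclass
  obtain ⟨A, hAsub, hAcard⟩ := Finset.exists_subset_card_eq hCcard
  obtain ⟨B, hBsub, hBcard⟩ := Finset.exists_subset_card_eq hB₂card
  have hAA₁ : A ⊆ A₁ := hAsub.trans (hCsub.trans hA₂sub)
  have hAA₀ : A ⊆ A₀ := hAA₁.trans hA₁sub
  have hBB₁ : B ⊆ B₁ := hBsub.trans hB₂sub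
  refine ⟨A, B, hAcard, hBcard, ?_, ?_⟩
  · -- column condition
    have hsign : ∀ a₁ ∈ A, ∀ a₂ ∈ A, ∀ b ∈ B,
        (f (a₁, b) < f (a₂, b) ↔ f (a₁, b₀) < f (a₂, b₀)) := by
      intro a₁ h₁ a₂ h₂ b hb
      have hp : (a₁, a₂) ∈ A₀ ×ˢ A₀ := Finset.mem_product.2 ⟨hAA₀ h₁, hAA₀ h₂⟩
      exact hB₁sign (a₁, a₂) hp b (hBB₁ hb) b₀ hb₀
    rcases hdir with hmono | hanti
    · left
      intro a₁ h₁ a₂ h₂ b hb hlt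
      have h0 : f (a₁, b₀) < f (a₂, b₀) :=
        hmono (Finset.mem_coe.2 (hAA₁ h₁)) (Finset.mem_coe.2 (hAA₁ h₂)) hlt
      exact (hsign a₁ h₁ a₂ h₂ b hb).2 h0
    · right
      intro a₁ h₁ a₂ h₂ b hb hlt
      have h0 : f (a₂, b₀) < f (a₁, b₀) :=
        hanti (Finset.mem_coe.2 (hAA₁ h₁)) (Finset.mem_coe.2 (hAA₁ h₂)) hlt
      exact (hsign a₂ h₂ a₁ h₁ b hb).2 h0
  · -- row condition
    rcases hrowdir with hmono | hanti
    · left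
      intro a ha b₁ hb₁ b₂ hb₂ hlt
      exact hmono a (hAsub ha) (Finset.mem_coe.2 (hBsub hb₁))
        (Finset.mem_coe.2 (hBsub hb₂)) hlt
    · right
      intro a ha b₁ hb₁ b₂ hb₂ hlt
      exact hanti a (hAsub ha) (Finset.mem_coe.2 (hBsub hb₁))
        (Finset.mem_coe.2 (hBsub hb₂)) hlt
end

section
/- For every n ≥ 3 there exists an increasing 2-dimensional array g of size (n−1)(n−2) × (n−1)² containing no (n−1) × 2 subarray of type (1,2) and no n × 2 subarray of type (2,1). -/
/-- `g` is of type (1,2) on `A × B`. -/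
def Type12On {N M : ℕ} (g : Fin N × Fin M → ℝ)
    (A : Finset (Fin N)) (B : Finset (Fin M)) : Prop :=
  ∀ x₁ ∈ A, ∀ x₂ ∈ B, ∀ y₁ ∈ A, ∀ y₂ ∈ B,
    (g (x₁, x₂) < g (y₁, y₂) ↔ (x₁ < y₁ ∨ (x₁ = y₁ ∧ x₂ < y₂)))

/-- `g` is of type (2,1) on `A × B`. -/
def Type21On {N M : ℕ} (g : Fin N × Fin M → ℝ)
    (A : Finset (Fin N)) (B : Finset (Fin M)) : Prop :=
  ∀ x₁ ∈ A, ∀ x₂ ∈ B, ∀ y₁ ∈ A, ∀ y₂ ∈ B,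
    (g (x₁, x₂) < g (y₁, y₂) ↔ (x₂ < y₂ ∨ (x₂ = y₂ ∧ x₁ < y₁)))

/-!
Cut the rows into consecutive blocks of `m = n - 1` rows and order the entries lexicographically
by (block of the row, column, position of the row in its block). Two rows of the same block are
compared column first, two rows of different blocks row first. Hence in a subarray of type (1,2)
with two columns all rows lie in different blocks, so there are at most `n - 2` of them, while in
a subarray of type (2,1) all rows lie in one block, so there are at most `n - 1` of them.
-/

theorem Nat.add_mul_lt_add_mul_of_lt {N r r' q q' : ℕ} (hr : r < N) (hq : q < q') :
    r + N * q < r' + N * q' :=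
  calc r + N * q < N * (q + 1) := by rw [Nat.mul_succ]; omega
    _ ≤ N * q' := Nat.mul_le_mul_left N hq
    _ ≤ r' + N * q' := Nat.le_add_left _ _

/-- For `b < K` and `0 < m`, the number with mixed-radix digits `(a / m, b, a % m)`, most
significant first. -/
def blockEncode (m K a b : ℕ) : ℕ := a % m + m * (b + K * (a / m))

section blockEncode

variable {m K a a' b b' : ℕ}

theorem blockEncode_lt_of_div_lt (hb : b < K) (h : a / m < a' / m) :
    blockEncode m K a b < blockEncode m K a' b' := by
  have hm : 0 < m := Nat.pos_of_ne_zero fun h0 => by simp [h0] at h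
  exact Nat.add_mul_lt_add_mul_of_lt (Nat.mod_lt a hm) (Nat.add_mul_lt_add_mul_of_lt hb h)

theorem blockEncode_lt_of_div_eq (hm : 0 < m) (h : a / m = a' / m) (hb : b < b') :
    blockEncode m K a b < blockEncode m K a' b' := by
  unfold blockEncode
  rw [← h]
  exact Nat.add_mul_lt_add_mul_of_lt (Nat.mod_lt a hm) (by omega)

theorem blockEncode_le_blockEncode (hm : 0 < m) (hb' : b' < K) (ha : a ≤ a') (hb : b ≤ b') :
    blockEncode m K a b ≤ blockEncode m K a' b' := by
  rcases (Nat.div_le_div_right (c := m) ha).lt_or_eq with hdiv | hdiv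
  · exact (blockEncode_lt_of_div_lt (hb.trans_lt hb') hdiv).le
  rcases hb.lt_or_eq with hb | rfl
  · exact (blockEncode_lt_of_div_eq hm hdiv hb).le
  have hmod : a % m ≤ a' % m := by
    have ha := Nat.div_add_mod a m
    have ha' := Nat.div_add_mod a' m
    rw [hdiv] at ha
    omega
  unfold blockEncode
  rw [hdiv]
  omega

theorem blockEncode_digits (hm : 0 < m) (hb : b < K) :
    (blockEncode m K a b / m / K, blockEncode m K a b / m % K, blockEncode m K a b % m) =
      (a / m, b, a % m) := by
  have hdiv : blockEncode m K a b / m = b + K * (a / m) := by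
    rw [blockEncode, Nat.add_mul_div_left _ _ hm, Nat.div_eq_of_lt (Nat.mod_lt a hm), zero_add]
  have hK : 0 < K := by omega
  rw [hdiv, Nat.add_mul_div_left _ _ hK, Nat.div_eq_of_lt hb, Nat.add_mul_mod_self_left,
    Nat.mod_eq_of_lt hb, blockEncode, Nat.add_mul_mod_self_left, Nat.mod_mod, zero_add]

theorem eq_and_eq_of_blockEncode_eq (hm : 0 < m) (hb : b < K) (hb' : b' < K)
    (h : blockEncode m K a b = blockEncode m K a' b') : a = a' ∧ b = b' := by
  have := (blockEncode_digits (a := a) hm hb).symm.trans (h ▸ blockEncode_digits hm hb')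
  simp only [Prod.mk.injEq] at this
  obtain ⟨hdiv, rfl, hmod⟩ := this
  refine ⟨?_, rfl⟩
  rw [← Nat.div_add_mod a m, ← Nat.div_add_mod a' m, hdiv, hmod]

end blockEncode

def blockArray (m : ℕ) {N K : ℕ} (p : Fin N × Fin K) : ℝ := blockEncode m K p.1 p.2

section blockArray

variable {m N K : ℕ}

theorem blockArray_injective (hm : 0 < m) :
    Function.Injective (blockArray m : Fin N × Fin K → ℝ) := by
  intro x y hxy
  obtain ⟨h1, h2⟩ := eq_and_eq_of_blockEncode_eq hm x.2.isLt y.2.isLt (Nat.cast_injective hxy)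
  exact Prod.ext (Fin.ext h1) (Fin.ext h2)

theorem blockArray_monotone (hm : 0 < m) : Monotone (blockArray m : Fin N × Fin K → ℝ) :=
  fun _ y h => Nat.cast_le.mpr (blockEncode_le_blockEncode hm y.2.isLt h.1 h.2)

theorem card_le_of_type12On_blockArray (hm : 0 < m) {k : ℕ} (hN : N ≤ m * k)
    {A : Finset (Fin N)} {B : Finset (Fin K)} (hB : 1 < B.card)
    (h : Type12On (blockArray m) A B) : A.card ≤ k := by
  have hb := B.min'_lt_max'_of_card hB
  have hB0 : B.Nonempty := Finset.card_pos.mp (by omega)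
  have not_lt_of_same_block : ∀ x ∈ A, ∀ y ∈ A, x.1 / m = y.1 / m → ¬ x < y :=
    fun x hx y hy hxy hlt =>
    (blockEncode_lt_of_div_eq hm hxy.symm hb).not_gt <| Nat.cast_lt.mp <|
      (h x hx _ (B.max'_mem hB0) y hy _ (B.min'_mem hB0)).mpr (Or.inl hlt)
  have hinj : Set.InjOn (fun x : Fin N => x.1 / m) A := fun x hx y hy hxy =>
    le_antisymm (not_lt.mp (not_lt_of_same_block y hy x hx hxy.symm))
      (not_lt.mp (not_lt_of_same_block x hx y hy hxy))
  have hmaps : Set.MapsTo (fun x : Fin N => x.1 / m) A (Finset.range k) := fun x _ =>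
    Finset.mem_range.mpr (Nat.div_lt_of_lt_mul (x.isLt.trans_le hN))
  simpa using Finset.card_le_card_of_injOn _ hmaps hinj

theorem card_le_of_type21On_blockArray (hm : 0 < m) {A : Finset (Fin N)} {B : Finset (Fin K)}
    (hB : 1 < B.card) (h : Type21On (blockArray m) A B) : A.card ≤ m := by
  have hb := B.min'_lt_max'_of_card hB
  have hB0 : B.Nonempty := Finset.card_pos.mp (by omega)
  have same_block : ∀ x ∈ A, ∀ y ∈ A, x.1 / m = y.1 / m := by
    suffices ∀ x ∈ A, ∀ y ∈ A, ¬ x.1 / m < y.1 / m from fun x hx y hy =>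
      le_antisymm (not_lt.mp (this y hy x hx)) (not_lt.mp (this x hx y hy))
    intro x hx y hy hxy
    exact (blockEncode_lt_of_div_lt (B.max' hB0).isLt hxy).not_gt <| Nat.cast_lt.mp <|
      (h y hy _ (B.min'_mem hB0) x hx _ (B.max'_mem hB0)).mpr (Or.inl hb)
  have hinj : Set.InjOn (fun x : Fin N => x.1 % m) A := fun x hx y hy hxy => Fin.ext <| by
    rw [← Nat.div_add_mod x.1 m, ← Nat.div_add_mod y.1 m, same_block x hx y hy]
    exact congrArg _ hxy
  have hmaps : Set.MapsTo (fun x : Fin N => x.1 % m) A (Finset.range m) := fun x _ =>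
    Finset.mem_range.mpr (Nat.mod_lt _ hm)
  simpa using Finset.card_le_card_of_injOn _ hmaps hinj

end blockArray

/-- For `n ≥ 3` there is an increasing array of size `(n-1)(n-2) × (n-1)²`
with no `(n-1) × 2` subarray of type (1,2) and no `n × 2` subarray of
type (2,1). -/
theorem stmt_11 (n : ℕ) (hn : 3 ≤ n) :
    ∃ g : Fin ((n - 1) * (n - 2)) × Fin ((n - 1) ^ 2) → ℝ,
      Function.Injective g ∧
      (∀ x y : Fin ((n - 1) * (n - 2)) × Fin ((n - 1) ^ 2),
        x.1 ≤ y.1 → x.2 ≤ y.2 → g x ≤ g y) ∧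
      (¬ ∃ (A : Finset (Fin ((n - 1) * (n - 2)))) (B : Finset (Fin ((n - 1) ^ 2))),
        A.card = n - 1 ∧ B.card = 2 ∧ Type12On g A B) ∧
      (¬ ∃ (A : Finset (Fin ((n - 1) * (n - 2)))) (B : Finset (Fin ((n - 1) ^ 2))),
        A.card = n ∧ B.card = 2 ∧ Type21On g A B) := by
  have hm : 0 < n - 1 := by omega
  refine ⟨blockArray (n - 1), blockArray_injective hm,
    fun x y h1 h2 => blockArray_monotone hm ⟨h1, h2⟩, ?_, ?_⟩
  · rintro ⟨A, B, hA, hB, h⟩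
    have := card_le_of_type12On_blockArray hm le_rfl (by omega) h
    omega
  · rintro ⟨A, B, hA, hB, h⟩
    have := card_le_of_type21On_blockArray hm (by omega) h
    omega
end
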